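/- Let G be a chordal graph with a simplicial vertex x_1 whose closed neighborhood N[x_1] = {x_1, …, x_r} induces a clique with r ≥ 2. For each i = 1, …, r let G_i = G \ N[x_i] and y_i = ∏_{x_j ∈ N(x_i)} x_j. If for each i, u^i_1, …, u^i_{s_i} is a linear quotients ordering for J(G_i), then the concatenated sequence y_1u^1_1, …, y_1u^1_{s_1}, y_2u^2_1, …, y_2u^2_{s_2}, …, y_ru^r_1, …, y_ru^r_{s_r} is a linear quotients ordering for J(G). (If G_i has no edges, the corresponding block is just y_i.) -/

import Mathlib

open Finset

variable {V : Type} [Fintype V] [DecidableEq V]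

/-- The closed neighborhood `N[v]` of a vertex, as a `Finset`. -/
def closedNbhd (G : SimpleGraph V) [DecidableRel G.Adj] (v : V) : Finset V :=
  insert v (G.neighborFinset v)

/-- The graph `G \ A` obtained by deleting the vertices in `A` (keeping them as
isolated vertices on the same vertex set). -/
def deleteVerts (G : SimpleGraph V) (A : Finset V) : SimpleGraph V where
  Adj u v := G.Adj u v ∧ u ∉ A ∧ v ∉ A
  symm := ⟨fun u v h => ⟨h.1.symm, h.2.2, h.2.1⟩⟩
  loopless := ⟨fun u h => G.loopless.irrefl u h.1⟩

/-- `C` is a vertex cover of `G`. -/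
def IsVertexCover (G : SimpleGraph V) (C : Finset V) : Prop :=
  ∀ ⦃u v : V⦄, G.Adj u v → u ∈ C ∨ v ∈ C

/-- `C` is a minimal vertex cover of `G`. -/
def IsMinVertexCover (G : SimpleGraph V) (C : Finset V) : Prop :=
  IsVertexCover G C ∧ ∀ D : Finset V, D ⊂ C → ¬ IsVertexCover G D

/-- A graph is chordal if it has no induced cycle of length greater than `3`. -/
def IsChordal (G : SimpleGraph V) : Prop :=
  ∀ n : ℕ, 4 ≤ n → ∀ f : ZMod n → V, Function.Injective f →
    ¬ (∀ i j : ZMod n, G.Adj (f i) (f j) ↔ j = i + 1 ∨ i = j + 1)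

/-- `S` is an independent set of `G`. -/
def IsIndepSet (G : SimpleGraph V) (S : Finset V) : Prop :=
  ∀ ⦃u : V⦄, u ∈ S → ∀ ⦃v : V⦄, v ∈ S → ¬ G.Adj u v

/-- `S` is a maximal independent set of `G`. -/
def IsMaxIndepSet (G : SimpleGraph V) (S : Finset V) : Prop :=
  IsIndepSet G S ∧ ∀ T : Finset V, IsIndepSet G T → S ⊆ T → S = T

/-- `F` is a maximal clique of `G`, i.e. a facet of the clique complex `Δ(G)`. -/
def IsMaxCliqueF (G : SimpleGraph V) (F : Finset V) : Prop :=
  G.IsClique ↑F ∧ ∀ F' : Finset V, G.IsClique ↑F' → F ⊆ F' → F = F'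

/-- `M` is an induced matching of `G`: a set of edges of `G` such that no edge of `G`
joins a vertex of one member to a vertex of a different member. -/
def IsInducedMatching (G : SimpleGraph V) (M : Finset (Sym2 V)) : Prop :=
  (∀ e ∈ M, e ∈ G.edgeSet) ∧
    ∀ e ∈ M, ∀ f ∈ M, e ≠ f → ∀ u v : V, u ∈ e → v ∈ f → ¬ G.Adj u v

/-- The induced matching number `im(G)`. -/
noncomputable def inducedMatchingNumber (G : SimpleGraph V) : ℕ :=
  sSup {n | ∃ M : Finset (Sym2 V), IsInducedMatching G M ∧ M.card = n}

/-- The graph `G` has no edges. -/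
def NoEdges (G : SimpleGraph V) : Prop := ∀ u v : V, ¬ G.Adj u v

open MvPolynomial in
/-- The squarefree monomial `∏_{v ∈ C} x_v` associated to a set of vertices. -/
noncomputable def coverMonomial (K : Type) [Field K] (C : Finset V) : MvPolynomial V K :=
  ∏ v ∈ C, X v

open MvPolynomial in
/-- The cover ideal `J(G)`, generated by the monomials of the minimal vertex covers. -/
noncomputable def coverIdeal (K : Type) [Field K] (G : SimpleGraph V) : Ideal (MvPolynomial V K) :=
  Ideal.span {m | ∃ C : Finset V, IsMinVertexCover G C ∧ m = coverMonomial K C}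

open MvPolynomial in
/-- The edge ideal `I(G)`. -/
noncomputable def edgeIdeal (K : Type) [Field K] (G : SimpleGraph V) : Ideal (MvPolynomial V K) :=
  Ideal.span {m | ∃ u v : V, G.Adj u v ∧ m = X u * X v}

open MvPolynomial in
/-- `m` is a linear quotients ordering: each successive colon ideal
`(m_1, …, m_{i-1}) : m_i` is generated by a subset of the variables. -/
def IsLinQuotOrd {K : Type} [Field K] {ι : Type} [LinearOrder ι]
    (m : ι → MvPolynomial V K) : Prop :=
  ∀ i : ι, ∃ T : Set V,
    (Ideal.span (m '' {j | j < i})).colon (Ideal.span {m i}) =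
      Ideal.span ((fun v => (X v : MvPolynomial V K)) '' T)

/-!
For squarefree monomials the colon ideal `(x_{A k} : k < i) : x_{A i}` is generated by the
monomials `x_{A k \ A i}`, so it is generated by variables iff every `A j \ A i` with `j < i`
contains a vertex `v` such that `A k ⊆ A i ∪ {v}` for some `k < i`.

Since `x_1` is simplicial, a minimal vertex cover of `G` misses some `x_t ∈ N[x_1]`; it then
contains `N(x_t)` and is `N(x_t) ∪ D` for a minimal vertex cover `D` of `G_t = G \ N[x_t]`, and
conversely. Within a block the exchange condition is inherited from `J(G_t)`. Across blocks
`t' < t` the vertex `x_t` works: removing `x_1` from `N(x_t) ∪ D ∪ {x_t}` leaves a vertex cover,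
and a minimal vertex cover inside it misses `x_1`, so it belongs to the first block.
-/

open MvPolynomial

noncomputable def sqfreeExp (A : Finset V) : V →₀ ℕ := ∑ v ∈ A, Finsupp.single v 1

section Monomials

variable {K : Type} [Field K]

omit [Fintype V]

theorem sqfreeExp_apply (A : Finset V) (w : V) : sqfreeExp A w = if w ∈ A then 1 else 0 := by
  simp [sqfreeExp, Finsupp.single_apply]

theorem sqfreeExp_le_add_sqfreeExp_iff {A B : Finset V} {a : V →₀ ℕ} :
    sqfreeExp A ≤ a + sqfreeExp B ↔ ∀ w ∈ A, w ∉ B → a w ≠ 0 := by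
  refine ⟨fun h w hwA hwB => ?_, fun h w => ?_⟩
  · have := h w
    simp only [Finsupp.add_apply, sqfreeExp_apply, if_pos hwA, if_neg hwB] at this
    omega
  · simp only [Finsupp.add_apply, sqfreeExp_apply]
    by_cases hwA : w ∈ A <;> by_cases hwB : w ∈ B <;> simp [Nat.one_le_iff_ne_zero, *]

omit [DecidableEq V] in
theorem coverMonomial_eq_monomial (A : Finset V) :
    coverMonomial K A = monomial (sqfreeExp A) 1 := by
  simp [coverMonomial, sqfreeExp, monomial_sum_one, X]

theorem coverMonomial_union {A B : Finset V} (h : Disjoint A B) :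
    coverMonomial K (A ∪ B) = coverMonomial K A * coverMonomial K B :=
  prod_union h

theorem mul_coverMonomial_mem_span_iff (f : MvPolynomial V K) (B : Finset V)
    (𝒮 : Set (Finset V)) :
    f * coverMonomial K B ∈ Ideal.span (coverMonomial K '' 𝒮) ↔
      ∀ a ∈ f.support, ∃ A ∈ 𝒮, ∀ w ∈ A, w ∉ B → a w ≠ 0 := by
  have hspan : coverMonomial K '' 𝒮 = (fun e => monomial e (1 : K)) '' (sqfreeExp '' 𝒮) := by
    rw [Set.image_image]
    exact Set.image_congr fun A _ => coverMonomial_eq_monomial A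
  simp_rw [hspan, mem_ideal_span_monomial_image, Set.exists_mem_image,
    ← sqfreeExp_le_add_sqfreeExp_iff, coverMonomial_eq_monomial]
  refine ⟨fun h a ha => h _ ?_, fun h e he => ?_⟩
  · rwa [mem_support_iff, coeff_mul_monomial, mul_one, ← mem_support_iff]
  · obtain ⟨a, ha, b, hb, rfl⟩ := Finset.mem_add.1 (support_mul _ _ he)
    rw [Finset.mem_singleton.1 (support_monomial_subset hb)]
    exact h a ha

end Monomials

section LinearQuotients

omit [Fintype V]

variable {ι : Type} [LinearOrder ι]

def LinQuotExchange (A : ι → Finset V) : Prop :=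
  ∀ ⦃i j⦄, j < i → ∃ v ∈ A j, v ∉ A i ∧ ∃ k < i, A k ⊆ insert v (A i)

variable {K : Type} [Field K]

theorem X_mem_colon_coverMonomial_iff (A : ι → Finset V) (i : ι) (v : V) :
    X v ∈ (Ideal.span ((fun j => coverMonomial K (A j)) '' {j | j < i})).colon
        (Ideal.span {coverMonomial K (A i)}) ↔ ∃ k < i, A k ⊆ insert v (A i) := by
  rw [Ideal.mem_colon_span_singleton, ← Set.image_image, mul_coverMonomial_mem_span_iff,
    support_X]
  simp [Finsupp.single_apply, Finset.subset_iff, or_iff_not_imp_right, eq_comm]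

theorem one_mem_colon_coverMonomial_iff (A : ι → Finset V) (i : ι) :
    (1 : MvPolynomial V K) ∈ (Ideal.span ((fun j => coverMonomial K (A j)) '' {j | j < i})).colon
        (Ideal.span {coverMonomial K (A i)}) ↔ ∃ k < i, A k ⊆ A i := by
  classical
  rw [Ideal.mem_colon_span_singleton, ← Set.image_image, mul_coverMonomial_mem_span_iff,
    ← C_1, support_C, if_neg one_ne_zero]
  simp [Finset.subset_iff]

theorem isLinQuotOrd_coverMonomial_iff (A : ι → Finset V) :
    IsLinQuotOrd (fun i => coverMonomial K (A i)) ↔ LinQuotExchange A := by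
  refine ⟨fun h i j hji => ?_, fun h i => ⟨{v | ∃ k < i, A k ⊆ insert v (A i)}, ?_⟩⟩
  · obtain ⟨T, hT⟩ := h i
    have hAj : coverMonomial K (A j) ∈ Ideal.span (X '' T) := by
      rw [← hT, Ideal.mem_colon_span_singleton]
      exact Ideal.mul_mem_right _ _ (Ideal.subset_span ⟨j, hji, rfl⟩)
    rw [coverMonomial_eq_monomial, mem_ideal_span_X_image] at hAj
    obtain ⟨v, hvT, hv⟩ := hAj (sqfreeExp (A j)) (by simp [mem_support_iff])
    have hXv : (X v : MvPolynomial V K) ∈ Ideal.span (X '' T) :=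
      Ideal.subset_span ⟨v, hvT, rfl⟩
    rw [← hT, X_mem_colon_coverMonomial_iff] at hXv
    obtain ⟨k, hk, hsub⟩ := hXv
    refine ⟨v, by simpa [sqfreeExp_apply] using hv, fun hvi => ?_, k, hk, hsub⟩
    have h1 : (1 : MvPolynomial V K) ∈ Ideal.span (X '' T) := by
      rw [← hT, one_mem_colon_coverMonomial_iff]
      exact ⟨k, hk, by rwa [Finset.insert_eq_of_mem hvi] at hsub⟩
    simpa using mem_ideal_span_X_image.1 h1 0
  · ext f
    rw [Ideal.mem_colon_span_singleton, ← Set.image_image (g := coverMonomial K),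
      mul_coverMonomial_mem_span_iff, mem_ideal_span_X_image]
    refine forall₂_congr fun a _ => ⟨?_, ?_⟩
    · rintro ⟨_, ⟨j, hji, rfl⟩, hj⟩
      obtain ⟨v, hvj, hvi, k, hk, hsub⟩ := h hji
      exact ⟨v, ⟨k, hk, hsub⟩, hj v hvj hvi⟩
    · rintro ⟨v, ⟨k, hk, hsub⟩, hv⟩
      refine ⟨A k, ⟨k, hk, rfl⟩, fun w hwk hwi => ?_⟩
      obtain rfl : w = v := by simpa [hwi] using hsub hwk
      exact hv

end LinearQuotients

section VertexCover

variable {G : SimpleGraph V}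

section

omit [Fintype V] [DecidableEq V]

theorem isMinVertexCover_iff_minimal {C : Finset V} :
    IsMinVertexCover G C ↔ Minimal (IsVertexCover G) C :=
  minimal_iff_forall_lt.symm

theorem IsVertexCover.mono {C D : Finset V} (hC : IsVertexCover G C) (hCD : C ⊆ D) :
    IsVertexCover G D :=
  fun _ _ huv => (hC huv).imp (@hCD _) (@hCD _)

theorem IsVertexCover.exists_isMinVertexCover_subset {C : Finset V} (hC : IsVertexCover G C) :
    ∃ D ⊆ C, IsMinVertexCover G D := by
  obtain ⟨D, hDC, hD⟩ := exists_minimal_le_of_wellFoundedLT _ C hC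
  exact ⟨D, hDC, isMinVertexCover_iff_minimal.2 hD⟩

end

omit [Fintype V] in
theorem IsVertexCover.erase {C : Finset V} {w : V} (hC : IsVertexCover G C)
    (hw : ∀ u, G.Adj w u → u ∈ C) : IsVertexCover G (C.erase w) := by
  intro u v huv
  by_cases hu : u = w
  · subst hu
    exact Or.inr (mem_erase.2 ⟨huv.ne.symm, hw v huv⟩)
  by_cases hv : v = w
  · subst hv
    exact Or.inl (mem_erase.2 ⟨huv.ne, hw u huv.symm⟩)
  exact (hC huv).imp (fun h => mem_erase.2 ⟨hu, h⟩) (fun h => mem_erase.2 ⟨hv, h⟩)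

omit [Fintype V] in
theorem IsMinVertexCover.notMem_of_forall_not_adj {C : Finset V} {w : V}
    (hC : IsMinVertexCover G C) (hw : ∀ u, ¬ G.Adj w u) : w ∉ C :=
  fun hwC => hC.2 _ (erase_ssubset hwC) (hC.1.erase fun u h => absurd h (hw u))

variable [DecidableRel G.Adj] (w : V)

theorem IsMinVertexCover.exists_mem_closedNbhd_notMem {C : Finset V}
    (hC : IsMinVertexCover G C) : ∃ u ∈ closedNbhd G w, u ∉ C := by
  by_contra! h
  refine hC.2 _ (erase_ssubset (h w (mem_insert_self _ _))) (hC.1.erase fun u hu => ?_)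
  exact h u (mem_insert_of_mem ((G.mem_neighborFinset _ _).2 hu))

omit [DecidableEq V] in
theorem IsVertexCover.neighborFinset_subset {C : Finset V} (hC : IsVertexCover G C) (hw : w ∉ C) :
    G.neighborFinset w ⊆ C :=
  fun _ hu => (hC ((G.mem_neighborFinset _ _).1 hu)).resolve_left hw

theorem IsVertexCover.sdiff_neighborFinset {C : Finset V} (hC : IsVertexCover G C) :
    IsVertexCover (deleteVerts G (closedNbhd G w)) (C \ G.neighborFinset w) := by
  rintro u v ⟨huv, hu, hv⟩
  have hN : ∀ {y}, y ∉ closedNbhd G w → y ∉ G.neighborFinset w := fun hy h =>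
    hy (mem_insert_of_mem h)
  exact (hC huv).imp (fun h => mem_sdiff.2 ⟨h, hN hu⟩) (fun h => mem_sdiff.2 ⟨h, hN hv⟩)

theorem isVertexCover_neighborFinset_union {E : Finset V}
    (hE : IsVertexCover (deleteVerts G (closedNbhd G w)) E) :
    IsVertexCover G (G.neighborFinset w ∪ E) := by
  intro u v huv
  by_cases hu : u ∈ G.neighborFinset w
  · exact Or.inl (mem_union_left _ hu)
  by_cases hv : v ∈ G.neighborFinset w
  · exact Or.inr (mem_union_left _ hv)
  have hu' : u ∉ closedNbhd G w := by
    rw [closedNbhd, mem_insert]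
    rintro (rfl | h)
    exacts [hv ((G.mem_neighborFinset _ _).2 huv), hu h]
  have hv' : v ∉ closedNbhd G w := by
    rw [closedNbhd, mem_insert]
    rintro (rfl | h)
    exacts [hu ((G.mem_neighborFinset _ _).2 huv.symm), hv h]
  exact (hE ⟨huv, hu', hv'⟩).imp (mem_union_right _) (mem_union_right _)

theorem IsMinVertexCover.disjoint_closedNbhd {E : Finset V}
    (hE : IsMinVertexCover (deleteVerts G (closedNbhd G w)) E) : Disjoint E (closedNbhd G w) :=
  disjoint_right.2 fun _ hu => hE.notMem_of_forall_not_adj fun _ h => h.2.1 hu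

theorem IsMinVertexCover.neighborFinset_union {E : Finset V}
    (hE : IsMinVertexCover (deleteVerts G (closedNbhd G w)) E) :
    IsMinVertexCover G (G.neighborFinset w ∪ E) := by
  have hwE : w ∉ G.neighborFinset w ∪ E := by
    simpa using disjoint_right.1 hE.disjoint_closedNbhd (mem_insert_self w _)
  rw [isMinVertexCover_iff_minimal] at hE ⊢
  refine ⟨isVertexCover_neighborFinset_union w hE.1, fun D hD hDle => ?_⟩
  have hND := hD.neighborFinset_subset w fun h => hwE (hDle h)
  have hED : E ⊆ D \ G.neighborFinset w := hE.2 (hD.sdiff_neighborFinset w) fun v hv => by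
    obtain ⟨hvD, hvN⟩ := mem_sdiff.1 hv
    exact (mem_union.1 (hDle hvD)).resolve_left hvN
  exact union_subset hND (hED.trans sdiff_subset)

theorem IsMinVertexCover.sdiff_neighborFinset {D : Finset V} (hD : IsMinVertexCover G D)
    (hw : w ∉ D) :
    IsMinVertexCover (deleteVerts G (closedNbhd G w)) (D \ G.neighborFinset w) := by
  rw [isMinVertexCover_iff_minimal] at hD ⊢
  refine ⟨hD.1.sdiff_neighborFinset w, fun E hE hED => fun v hv => ?_⟩
  have hDNE := hD.2 (isVertexCover_neighborFinset_union w hE)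
    (union_subset (hD.1.neighborFinset_subset w hw) (hED.trans sdiff_subset))
  obtain ⟨hvD, hvN⟩ := mem_sdiff.1 hv
  exact (mem_union.1 (hDNE hvD)).resolve_left hvN

end VertexCover

section SimplicialClique

variable {ι : Type} {κ : ι → Type}

/-- The support of the monomial `y_t u^t_i`. -/
def liftCover (G : SimpleGraph V) [DecidableRel G.Adj] (x : ι → V) (C : ∀ t, κ t → Finset V)
    (p : Σ t, κ t) : Finset V :=
  G.neighborFinset (x p.1) ∪ C p.1 p.2

variable {G : SimpleGraph V} [DecidableRel G.Adj] {x : ι → V} {C : ∀ t, κ t → Finset V}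
  (hC : ∀ t D, IsMinVertexCover (deleteVerts G (closedNbhd G (x t))) D ↔ ∃ i, C t i = D)
include hC

theorem disjoint_closedNbhd_of_enum (t : ι) (i : κ t) : Disjoint (C t i) (closedNbhd G (x t)) :=
  ((hC t _).2 ⟨i, rfl⟩).disjoint_closedNbhd (x t)

theorem isMinVertexCover_liftCover (p : Σ t, κ t) : IsMinVertexCover G (liftCover G x C p) :=
  ((hC p.1 _).2 ⟨p.2, rfl⟩).neighborFinset_union (x p.1)

theorem exists_liftCover_eq {D : Finset V} (hD : IsMinVertexCover G D) {t : ι} (ht : x t ∉ D) :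
    ∃ i, liftCover G x C ⟨t, i⟩ = D := by
  obtain ⟨i, hi⟩ := (hC t _).1 (hD.sdiff_neighborFinset (x t) ht)
  exact ⟨i, by rw [liftCover, hi, union_sdiff_of_subset (hD.1.neighborFinset_subset (x t) ht)]⟩

theorem range_liftCover {t₀ : ι} (hN : (closedNbhd G (x t₀) : Set V) ⊆ Set.range x) :
    Set.range (liftCover G x C) = {D | IsMinVertexCover G D} := by
  refine Set.Subset.antisymm (Set.range_subset_iff.2 (isMinVertexCover_liftCover hC))
    fun D hD => ?_
  obtain ⟨u, hu, huD⟩ := hD.exists_mem_closedNbhd_notMem (x t₀)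
  obtain ⟨t, rfl⟩ := hN hu
  obtain ⟨i, hi⟩ := exists_liftCover_eq hC hD huD
  exact ⟨⟨t, i⟩, hi⟩

theorem linQuotExchange_liftCover [LinearOrder ι] [∀ t, LinearOrder (κ t)] {t₀ : ι}
    (ht₀ : IsBot t₀) (hN : (closedNbhd G (x t₀) : Set V) ⊆ Set.range x)
    (hx : Pairwise fun t t' => G.Adj (x t) (x t'))
    (hLQ : ∀ t, LinQuotExchange (C t)) :
    LinQuotExchange fun p : Lex (Σ t, κ t) => liftCover G x C (ofLex p) := by
  rintro ⟨t, i⟩ ⟨t', i'⟩ (⟨_, _, hlt⟩ | ⟨_, _, hlt⟩)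
  · have hxt : x t ∉ liftCover G x C ⟨t, i⟩ := notMem_union.2
      ⟨fun h => G.irrefl ((G.mem_neighborFinset _ _).1 h),
        fun h => disjoint_left.1 (disjoint_closedNbhd_of_enum hC t i) h (mem_insert_self _ _)⟩
    have hcov : IsVertexCover G ((insert (x t) (liftCover G x C ⟨t, i⟩)).erase (x t₀)) := by
      refine ((isMinVertexCover_liftCover hC _).1.mono (subset_insert _ _)).erase fun u hu => ?_
      obtain ⟨j, rfl⟩ := hN (mem_insert_of_mem ((G.mem_neighborFinset _ _).2 hu))
      rcases eq_or_ne j t with rfl | hjt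
      · exact mem_insert_self _ _
      · exact mem_insert_of_mem (mem_union_left _ ((G.mem_neighborFinset _ _).2 (hx hjt.symm)))
    obtain ⟨D, hDsub, hD⟩ := hcov.exists_isMinVertexCover_subset
    obtain ⟨j, rfl⟩ := exists_liftCover_eq hC hD fun h => (mem_erase.1 (hDsub h)).1 rfl
    exact ⟨x t, mem_union_left _ ((G.mem_neighborFinset _ _).2 (hx hlt.ne)), hxt,
      toLex ⟨t₀, j⟩, Sigma.Lex.left _ _ ((ht₀ t').trans_lt hlt),
      hDsub.trans (erase_subset _ _)⟩
  · obtain ⟨v, hv, hvi, k, hk, hsub⟩ := hLQ t hlt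
    have hvN : v ∉ G.neighborFinset (x t) := fun h =>
      disjoint_left.1 (disjoint_closedNbhd_of_enum hC t i') hv (mem_insert_of_mem h)
    refine ⟨v, mem_union_right _ hv, ?_, toLex ⟨t, k⟩, Sigma.Lex.right _ _ hk, ?_⟩
    · show v ∉ G.neighborFinset (x t) ∪ C t i
      exact notMem_union.2 ⟨hvN, hvi⟩
    · exact union_subset (subset_union_left.trans (subset_insert _ _))
        (hsub.trans (insert_subset_insert _ subset_union_right))

end SimplicialClique

/-- Van Tuyl–Villarreal: concatenating linear quotients orderings of the `J(G_i)`,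
multiplied by the monomials `y_i` of the neighborhoods, gives a linear quotients
ordering of `J(G)`. -/
theorem stmt_6 (K : Type) [Field K] {V : Type} [Fintype V] [LinearOrder V]
    (G : SimpleGraph V) [DecidableRel G.Adj]
    (r : ℕ) (hr : 2 ≤ r) (x : Fin r → V) (hx : Function.Injective x)
    (hN : closedNbhd G (x ⟨0, by omega⟩) = Finset.image x Finset.univ)
    (hcl : G.IsClique (closedNbhd G (x ⟨0, by omega⟩) : Set V))
    (s : Fin r → ℕ) (C : ∀ t : Fin r, Fin (s t) → Finset V)
    (hCenum : ∀ t, ∀ D : Finset V,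
      IsMinVertexCover (deleteVerts G (closedNbhd G (x t))) D ↔ ∃ i, C t i = D)
    (hLQ : ∀ t, IsLinQuotOrd (fun i => coverMonomial K (C t i))) :
    Ideal.span (Set.range (fun p : Lex (Σ t : Fin r, Fin (s t)) =>
        coverMonomial K (G.neighborFinset (x (ofLex p).1)) *
          coverMonomial K (C (ofLex p).1 (ofLex p).2))) = coverIdeal K G ∧
    IsLinQuotOrd (fun p : Lex (Σ t : Fin r, Fin (s t)) =>
      coverMonomial K (G.neighborFinset (x (ofLex p).1)) *
        coverMonomial K (C (ofLex p).1 (ofLex p).2)) := by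
  have hxN : ∀ t, x t ∈ closedNbhd G (x ⟨0, by omega⟩) := fun t => by simp [hN]
  have hN' : (closedNbhd G (x ⟨0, by omega⟩) : Set V) ⊆ Set.range x := by simp [hN]
  have hclique : Pairwise fun t t' => G.Adj (x t) (x t') :=
    fun t t' h => hcl (hxN t) (hxN t') (hx.ne h)
  have hfamily : (fun p : Lex (Σ t : Fin r, Fin (s t)) =>
      coverMonomial K (G.neighborFinset (x (ofLex p).1)) *
        coverMonomial K (C (ofLex p).1 (ofLex p).2)) =
      fun p => coverMonomial K (liftCover G x C (ofLex p)) :=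
    funext fun p => (coverMonomial_union ((disjoint_closedNbhd_of_enum hCenum _ _).symm.mono_left
      (subset_insert _ _))).symm
  rw [hfamily]
  refine ⟨?_, (isLinQuotOrd_coverMonomial_iff _).2 (linQuotExchange_liftCover hCenum
    (t₀ := ⟨0, by omega⟩) (fun _ => Nat.zero_le _) hN' hclique
    fun t => (isLinQuotOrd_coverMonomial_iff _).1 (hLQ t))⟩
  rw [coverIdeal]
  change Ideal.span (Set.range ((coverMonomial K ∘ liftCover G x C) ∘ ofLex)) = _
  rw [ofLex.surjective.range_comp, Set.range_comp, range_liftCover hCenum hN']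
  simp only [Set.image, Set.mem_ofPred_eq, eq_comm]
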